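/- For every q with 0 < q < 1, every integer n ≥ 2 and every x ∈ [0,1]: L_{n,q}(t³,x) = (q^n/[n]_q²) · x(1 − v(q,x)) · [ 2 − q^n + [n−1]_q (1+q) v(q²,x) + [n]_q q v(q²,x) ], where t³ denotes the function t ↦ t³ on [0,1]. -/

import Mathlib

open Finset Filter

noncomputable section

/-- The q-integer `[n]_q = 1 + q + ⋯ + q^(n-1)`. -/
def qInt (q : ℝ) (n : ℕ) : ℝ := ∑ i ∈ Finset.range n, q ^ i

/-- The q-factorial `[n]_q!`. -/
def qFact (q : ℝ) : ℕ → ℝ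
  | 0 => 1
  | n + 1 => qFact q n * qInt q (n + 1)

/-- The q-binomial coefficient `[n k]_q`. -/
def qBinom (q : ℝ) (n k : ℕ) : ℝ := qFact q n / (qFact q k * qFact q (n - k))

/-- The Lupaş basis function `b_{nk}(q;x)`. -/
def lupasB (q : ℝ) (n k : ℕ) (x : ℝ) : ℝ :=
  qBinom q n k * q ^ (k * (k - 1) / 2) * x ^ k * (1 - x) ^ (n - k) /
    ∏ j ∈ Finset.range (n - 1), (1 - x + q ^ (j + 1) * x)

/-- The limit Lupaş basis function `b_{∞k}(q;x)` (for `0 < q < 1`, `x ∈ [0,1)`). -/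
def lupasBInf (q : ℝ) (k : ℕ) (x : ℝ) : ℝ :=
  q ^ (k * (k - 1) / 2) * (x / (1 - x)) ^ k /
    ((1 - q) ^ k * qFact q k * ∏' j : ℕ, (1 + q ^ j * (x / (1 - x))))

/-- The Lupaş q-analogue of the Bernstein operator `R_{n,q}(f,x)`. -/
def lupasR (q : ℝ) (n : ℕ) (f : ℝ → ℝ) (x : ℝ) : ℝ :=
  ∑ k ∈ Finset.range (n + 1), f (qInt q k / qInt q n) * lupasB q n k x

/-- The limit q-Lupaş operator `R_{∞,q}(f,x)` for `0 < q < 1`. -/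
def lupasRInfLow (q : ℝ) (f : ℝ → ℝ) (x : ℝ) : ℝ :=
  if x = 1 then f 1 else ∑' k : ℕ, f (1 - q ^ k) * lupasBInf q k x

/-- The limit q-Lupaş operator `R_{∞,q}(f,x)`: for `q > 1` it is defined by
reflection, `R_{∞,q}(f,x) = R_{∞,1/q}(g,1-x)` with `g(x) = f(1-x)`. -/
def lupasRInf (q : ℝ) (f : ℝ → ℝ) (x : ℝ) : ℝ :=
  if 1 < q then lupasRInfLow (1 / q) (fun t => f (1 - t)) (1 - x)
  else lupasRInfLow q f x

/-- The transform `v(q,x) = qx/(1-x+qx)`. -/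
def vq (q x : ℝ) : ℝ := q * x / (1 - x + q * x)

/-- `L_{n,q}(f,x) = R_{n,q}(f,x) - R_{∞,q}(f,x)`. -/
def lupasL (q : ℝ) (n : ℕ) (f : ℝ → ℝ) (x : ℝ) : ℝ :=
  lupasR q n f x - lupasRInf q f x

/-- The modulus of continuity `ω(f,t)` of `f` on `[0,1]`. -/
def omega1 (f : ℝ → ℝ) (t : ℝ) : ℝ :=
  sSup {d | ∃ x ∈ Set.Icc (0:ℝ) 1, ∃ y ∈ Set.Icc (0:ℝ) 1, |x - y| ≤ t ∧ d = |f x - f y|}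

/-- The second modulus of smoothness `ω₂(f,t)` of `f` on `[0,1]`. -/
def omega2 (f : ℝ → ℝ) (t : ℝ) : ℝ :=
  sSup {d | ∃ h, 0 ≤ h ∧ h ≤ t ∧ ∃ x, 0 ≤ x ∧ x ≤ 1 - 2 * h ∧
    d = |f (x + 2 * h) - 2 * f (x + h) + f x|}

/-!
Put `t = x/(1-x)`. Then `b_{nk}(q;x) = [n k]_q q^(k(k-1)/2) tᵏ / ∏_{j<n} (1 + qʲt)`, and
`b_{∞k}(q;x)` is the same with the finite product replaced by `∏ⱼ (1 + qʲt)`, which by Euler's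
identity is the q-exponential series `E(t) = ∑ₖ q^(k(k-1)/2) tᵏ / ((1-q)ᵏ [k]_q!)`. Euler's
identity itself follows from `E(u) = (1 + u) E(qu)` and `E(qᴺu) → 1`.

Cauchy's q-binomial theorem and Euler's identity evaluate the q-moments:
`∑ₖ q^(ik) b_{nk} = ∏_{j<i} (1 + q^(n+j)t)/(1 + qʲt)` and `∑ₖ q^(ik) b_{∞k} = ∏_{j<i} 1/(1 + qʲt)`.
The nodes are `[k]_q/[n]_q = (1 - qᵏ)/(1 - qⁿ)` and `1 - qᵏ`, so expanding `(1 - qᵏ)³` expresses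
both operators on `t³` through the moments with `i ≤ 3`, and the claim is a rational identity.
At `x = 1` both operators reproduce `f 1`.
-/

open Topology

lemma one_sub_pow_eq_sum {R : Type*} [CommRing R] (y : R) (p : ℕ) :
    (1 - y) ^ p = ∑ i ∈ range (p + 1), (-1) ^ i * p.choose i * y ^ i := by
  rw [sub_eq_neg_add, add_pow]
  refine sum_congr rfl fun i _ => ?_
  rw [neg_pow, one_pow]
  ring

section QBinomial

variable {q : ℝ}

lemma qInt_add (m n : ℕ) : qInt q (m + n) = qInt q m + q ^ m * qInt q n := by
  simp only [qInt, sum_range_add, mul_sum, pow_add]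

lemma one_sub_mul_qInt (n : ℕ) : (1 - q) * qInt q n = 1 - q ^ n := mul_neg_geom_sum q n

lemma qInt_eq_div (hq : q ≠ 1) (n : ℕ) : qInt q n = (1 - q ^ n) / (1 - q) := by
  rw [← one_sub_mul_qInt, mul_div_cancel_left₀ _ (sub_ne_zero.mpr hq.symm)]

lemma qInt_pos (hq : 0 < q) {n : ℕ} (hn : n ≠ 0) : 0 < qInt q n :=
  sum_pos (fun i _ => pow_pos hq i) (nonempty_range_iff.mpr hn)

lemma qFact_pos (hq : 0 < q) (n : ℕ) : 0 < qFact q n := by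
  induction n with
  | zero => exact one_pos
  | succ n ih => exact mul_pos ih (qInt_pos hq n.succ_ne_zero)

lemma qBinom_zero_right (hq : 0 < q) (n : ℕ) : qBinom q n 0 = 1 := by
  simp [qBinom, qFact, (qFact_pos hq n).ne']

lemma qBinom_self (hq : 0 < q) (n : ℕ) : qBinom q n n = 1 := by
  simp [qBinom, qFact, (qFact_pos hq n).ne']

lemma qBinom_succ_succ (hq : 0 < q) {n k : ℕ} (hk : k < n) :
    qBinom q (n + 1) (k + 1) = qBinom q n (k + 1) + q ^ (n - k) * qBinom q n k := by
  obtain ⟨a, rfl⟩ : ∃ a, n = k + 1 + a := ⟨n - (k + 1), by omega⟩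
  have hsplit : qInt q (k + 1 + a + 1) = qInt q (a + 1) + q ^ (a + 1) * qInt q (k + 1) := by
    rw [← qInt_add, add_comm (a + 1), ← add_assoc]
  have hFk := (qFact_pos hq k).ne'
  have hFa := (qFact_pos hq a).ne'
  have hIk := (qInt_pos hq k.succ_ne_zero).ne'
  have hIa := (qInt_pos hq a.succ_ne_zero).ne'
  simp only [qBinom, show k + 1 + a + 1 - (k + 1) = a + 1 by omega, Nat.add_sub_cancel_left,
    show k + 1 + a - k = a + 1 by omega, qFact, hsplit]
  field_simp

lemma prod_range_pow_succ (m : ℕ) :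
    ∏ j ∈ range m, q ^ (j + 1) = q ^ ((m + 1) * m / 2) := by
  have h := sum_range_id (m + 1)
  rw [sum_range_succ'] at h
  rw [prod_pow_eq_pow_sum]
  simpa using congrArg (q ^ ·) h

lemma prod_one_add_pow_mul_shift (u : ℝ) (n i : ℕ) :
    (∏ j ∈ range n, (1 + q ^ j * (q ^ i * u))) * ∏ j ∈ range i, (1 + q ^ j * u) =
      (∏ j ∈ range n, (1 + q ^ j * u)) * ∏ j ∈ range i, (1 + q ^ (n + j) * u) := by
  rw [← prod_range_add (fun j => 1 + q ^ j * u), add_comm n, prod_range_add, mul_comm]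
  simp only [pow_add, mul_comm (q ^ i), mul_assoc]

/-- Cauchy's q-binomial theorem. -/
theorem prod_one_add_pow_mul (hq : 0 < q) (n : ℕ) (u : ℝ) :
    ∏ j ∈ range n, (1 + q ^ j * u) =
      ∑ k ∈ range (n + 1), qBinom q n k * q ^ (k * (k - 1) / 2) * u ^ k := by
  induction n with
  | zero => simp [qBinom_zero_right hq]
  | succ n ih =>
    have hcoeff : ∀ k ∈ range n,
        qBinom q (n + 1) (k + 1) * q ^ ((k + 1) * (k + 1 - 1) / 2) * u ^ (k + 1) =
          qBinom q n (k + 1) * q ^ ((k + 1) * (k + 1 - 1) / 2) * u ^ (k + 1) +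
            q ^ n * u * (qBinom q n k * q ^ (k * (k - 1) / 2) * u ^ k) := by
      intro k hk
      have hkn := mem_range.mp hk
      have hpow : q ^ n = q ^ (n - k) * q ^ k := by rw [← pow_add, Nat.sub_add_cancel hkn.le]
      rw [qBinom_succ_succ hq hkn, Nat.triangle_succ, hpow]
      ring
    have hlow := sum_range_succ' (fun k => qBinom q n k * q ^ (k * (k - 1) / 2) * u ^ k) n
    have hhigh := sum_range_succ (fun k => qBinom q n k * q ^ (k * (k - 1) / 2) * u ^ k) n
    rw [prod_range_succ, ih]
    conv_rhs =>
      rw [sum_range_succ', sum_range_succ, sum_congr rfl hcoeff, sum_add_distrib, ← mul_sum]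
    simp only [qBinom_self hq, qBinom_zero_right hq, Nat.triangle_succ] at hlow hhigh ⊢
    linear_combination hlow + q ^ n * u * hhigh

end QBinomial

/-- Terms of the q-exponential series, whose sum is the normalising product of `lupasBInf`
(`tprod_one_add_pow_mul`). -/
def eulerTerm (q u : ℝ) (k : ℕ) : ℝ := q ^ (k * (k - 1) / 2) * u ^ k / ((1 - q) ^ k * qFact q k)

section EulerProduct

variable {q : ℝ}

@[simp] lemma eulerTerm_zero (u : ℝ) : eulerTerm q u 0 = 1 := by simp [eulerTerm, qFact]

lemma eulerTerm_mul_left (c u : ℝ) (k : ℕ) : eulerTerm q (c * u) k = c ^ k * eulerTerm q u k := by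
  simp only [eulerTerm, mul_pow]
  ring

lemma eulerTerm_succ (hq0 : 0 < q) (hq1 : q < 1) (u : ℝ) (k : ℕ) :
    eulerTerm q u (k + 1) = eulerTerm q u k * (q ^ k * u / ((1 - q) * qInt q (k + 1))) := by
  have h1q : 1 - q ≠ 0 := by linarith
  have hI := (qInt_pos hq0 k.succ_ne_zero).ne'
  have hF := (qFact_pos hq0 k).ne'
  simp only [eulerTerm, Nat.triangle_succ, qFact, pow_add, pow_succ]
  field_simp

lemma summable_eulerTerm (hq0 : 0 < q) (hq1 : q < 1) (u : ℝ) : Summable (eulerTerm q u) := by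
  refine summable_of_ratio_norm_eventually_le (r := 1 / 2) (by norm_num) ?_
  have hsmall : ∀ᶠ k in atTop, q ^ k * |u| / (1 - q) ≤ 1 / 2 := by
    have := ((tendsto_pow_atTop_nhds_zero_of_lt_one hq0.le hq1).mul_const |u|).div_const (1 - q)
    rw [zero_mul, zero_div] at this
    exact this.eventually_le_const (by norm_num)
  filter_upwards [hsmall] with k hk
  have hratio : ‖q ^ k * u / ((1 - q) * qInt q (k + 1))‖ ≤ 1 / 2 := by
    have h1q : 0 < 1 - q := by linarith
    have hI : 1 ≤ qInt q (k + 1) := by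
      simpa [qInt] using single_le_sum (f := (q ^ ·)) (fun i _ => (pow_pos hq0 i).le)
        (mem_range.mpr k.succ_pos)
    rw [norm_div, norm_mul, norm_mul, Real.norm_of_nonneg (pow_pos hq0 k).le,
      Real.norm_of_nonneg h1q.le,
      Real.norm_of_nonneg (show 0 ≤ qInt q (k + 1) by linarith), Real.norm_eq_abs]
    refine le_trans ?_ hk
    gcongr
    exact le_mul_of_one_le_right h1q.le hI
  rw [eulerTerm_succ hq0 hq1, norm_mul, mul_comm]
  gcongr

lemma tsum_eulerTerm_eq_one_add_mul (hq0 : 0 < q) (hq1 : q < 1) (u : ℝ) :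
    ∑' k, eulerTerm q u k = (1 + u) * ∑' k, eulerTerm q (q * u) k := by
  have hs := summable_eulerTerm hq0 hq1 u
  have hs' := summable_eulerTerm hq0 hq1 (q * u)
  have hterm : ∀ k,
      eulerTerm q u (k + 1) - eulerTerm q (q * u) (k + 1) = u * eulerTerm q (q * u) k := by
    intro k
    have h1q : 1 - q ≠ 0 := by linarith
    have hI := (qInt_pos hq0 k.succ_ne_zero).ne'
    rw [eulerTerm_mul_left, eulerTerm_mul_left, eulerTerm_succ hq0 hq1]
    field_simp
    rw [← one_sub_mul_qInt]
    ring
  have hdiff : ∑' k, eulerTerm q u k - ∑' k, eulerTerm q (q * u) k =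
      u * ∑' k, eulerTerm q (q * u) k := by
    rw [← hs.tsum_sub hs', (hs.sub hs').tsum_eq_zero_add]
    simp [hterm, tsum_mul_left]
  linear_combination hdiff

lemma tsum_eulerTerm_eq_prod_mul (hq0 : 0 < q) (hq1 : q < 1) (u : ℝ) (N : ℕ) :
    ∑' k, eulerTerm q u k = (∏ j ∈ range N, (1 + q ^ j * u)) * ∑' k, eulerTerm q (q ^ N * u) k := by
  induction N with
  | zero => simp
  | succ N ih =>
    rw [ih, tsum_eulerTerm_eq_one_add_mul hq0 hq1, prod_range_succ, pow_succ', mul_assoc q]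
    ring

lemma tendsto_tsum_eulerTerm_pow_mul (hq0 : 0 < q) (hq1 : q < 1) (u : ℝ) :
    Tendsto (fun N => ∑' k, eulerTerm q (q ^ N * u) k) atTop (𝓝 1) := by
  simp_rw [eulerTerm_mul_left]
  have hpow : ∀ k : ℕ, Tendsto (fun N => (q ^ N) ^ k * eulerTerm q u k) atTop
      (𝓝 ((0 : ℝ) ^ k * eulerTerm q u k)) := fun k =>
    ((tendsto_pow_atTop_nhds_zero_of_lt_one hq0.le hq1).pow k).mul_const _
  have hbound : ∀ N k, ‖(q ^ N) ^ k * eulerTerm q u k‖ ≤ |eulerTerm q u k| := fun N k => by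
    rw [norm_mul, Real.norm_eq_abs, Real.norm_eq_abs, abs_of_nonneg (by positivity)]
    exact mul_le_of_le_one_left (abs_nonneg _) (pow_le_one₀ (by positivity)
      (pow_le_one₀ hq0.le hq1.le))
  convert tendsto_tsum_of_dominated_convergence (summable_eulerTerm hq0 hq1 u).abs hpow
    (Eventually.of_forall hbound)
  rw [tsum_eq_single 0 (fun k hk => by simp [hk])]
  simp

/-- Euler's identity. -/
theorem tprod_one_add_pow_mul (hq0 : 0 < q) (hq1 : q < 1) (u : ℝ) :
    ∏' j : ℕ, (1 + q ^ j * u) = ∑' k, eulerTerm q u k := by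
  have hmult : Multipliable fun j : ℕ => 1 + q ^ j * u :=
    Real.multipliable_one_add_of_summable
      ((summable_geometric_of_lt_one hq0.le hq1).mul_right u)
  have hlim := hmult.tendsto_prod_tprod_nat.mul (tendsto_tsum_eulerTerm_pow_mul hq0 hq1 u)
  rw [mul_one] at hlim
  refine tendsto_nhds_unique hlim ?_
  simp_rw [← tsum_eulerTerm_eq_prod_mul hq0 hq1]
  exact tendsto_const_nhds

lemma one_le_tsum_eulerTerm (hq0 : 0 < q) (hq1 : q < 1) {u : ℝ} (hu : 0 ≤ u) :
    1 ≤ ∑' k, eulerTerm q u k := by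
  have hnonneg : ∀ k, 0 ≤ eulerTerm q u k := fun k => by
    unfold eulerTerm
    have := qFact_pos hq0 k
    have : 0 ≤ 1 - q := by linarith
    positivity
  simpa using (summable_eulerTerm hq0 hq1 u).le_tsum 0 (fun k _ => hnonneg k)

end EulerProduct

section Lupas

variable {q x : ℝ}

lemma lupasB_eq_div (hx : x < 1) {n k : ℕ} (hk : k ≤ n) :
    lupasB q n k x = qBinom q n k * q ^ (k * (k - 1) / 2) * (x / (1 - x)) ^ k /
      ∏ j ∈ range n, (1 + q ^ j * (x / (1 - x))) := by
  have h1x : 1 - x ≠ 0 := by linarith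
  obtain _ | m := n
  · obtain rfl : k = 0 := by omega
    simp [lupasB]
  have hden : ∏ j ∈ range m, (1 - x + q ^ (j + 1) * x) =
      (1 - x) ^ m * ∏ j ∈ range m, (1 + q ^ (j + 1) * (x / (1 - x))) := by
    have hfactor : ∀ j ∈ range m,
        1 - x + q ^ (j + 1) * x = (1 - x) * (1 + q ^ (j + 1) * (x / (1 - x))) := fun j _ => by
      field_simp
    rw [prod_congr rfl hfactor, prod_mul_distrib, prod_const, card_range]
  have hpow : (1 - x) ^ (m + 1 - k) * (1 - x) ^ k = (1 - x) ^ m * (1 - x) := by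
    rw [← pow_add, ← pow_succ, Nat.sub_add_cancel hk]
  rw [lupasB, Nat.add_sub_cancel, hden, prod_range_succ']
  field_simp
  congr 1
  rw [div_pow]
  field_simp
  linear_combination (qBinom q (m + 1) k * q ^ (k * (k - 1) / 2) * x ^ k) * hpow

lemma sum_pow_mul_lupasB (hq0 : 0 < q) (hx0 : 0 ≤ x) (hx1 : x < 1) (n i : ℕ) :
    ∑ k ∈ range (n + 1), (q ^ i) ^ k * lupasB q n k x =
      (∏ j ∈ range i, (1 + q ^ (n + j) * (x / (1 - x)))) /
        ∏ j ∈ range i, (1 + q ^ j * (x / (1 - x))) := by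
  set t := x / (1 - x)
  have hpos : ∀ (m : ℕ) {u : ℝ}, 0 ≤ u → 0 < ∏ j ∈ range m, (1 + q ^ j * u) := fun m u hu =>
    prod_pos fun j _ => by positivity
  have ht : 0 ≤ t := div_nonneg hx0 (by linarith)
  have hsum : ∑ k ∈ range (n + 1), (q ^ i) ^ k * lupasB q n k x =
      (∏ j ∈ range n, (1 + q ^ j * (q ^ i * t))) / ∏ j ∈ range n, (1 + q ^ j * t) := by
    rw [prod_one_add_pow_mul hq0, sum_div]
    refine sum_congr rfl fun k hk => ?_
    rw [lupasB_eq_div hx1 (Nat.lt_succ_iff.mp (mem_range.mp hk))]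
    ring
  rw [hsum, div_eq_div_iff (hpos n ht).ne' (hpos i ht).ne', prod_one_add_pow_mul_shift,
    mul_comm]

lemma hasSum_pow_mul_lupasBInf (hq0 : 0 < q) (hq1 : q < 1) (hx0 : 0 ≤ x) (hx1 : x < 1) (i : ℕ) :
    HasSum (fun k => (q ^ i) ^ k * lupasBInf q k x)
      (1 / ∏ j ∈ range i, (1 + q ^ j * (x / (1 - x)))) := by
  set t := x / (1 - x)
  have ht : 0 ≤ t := div_nonneg hx0 (by linarith)
  have hEpos := (one_le_tsum_eulerTerm hq0 hq1 (by positivity : 0 ≤ q ^ i * t)).trans_lt' one_pos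
  have hterm : ∀ k, (q ^ i) ^ k * lupasBInf q k x =
      eulerTerm q (q ^ i * t) k / ∑' k, eulerTerm q t k := fun k => by
    rw [lupasBInf, tprod_one_add_pow_mul hq0 hq1, eulerTerm_mul_left, eulerTerm]
    ring
  rw [funext hterm, tsum_eulerTerm_eq_prod_mul hq0 hq1 t i]
  have h := (summable_eulerTerm hq0 hq1 (q ^ i * t)).hasSum.div_const
    ((∏ j ∈ range i, (1 + q ^ j * t)) * ∑' k, eulerTerm q (q ^ i * t) k)
  rwa [div_mul_cancel_right₀ hEpos.ne', ← one_div] at h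

lemma lupasR_pow (hq0 : 0 < q) (hq1 : q < 1) (hx0 : 0 ≤ x) (hx1 : x < 1) (n p : ℕ) :
    lupasR q n (· ^ p) x =
      (∑ i ∈ range (p + 1), (-1) ^ i * p.choose i *
        ((∏ j ∈ range i, (1 + q ^ (n + j) * (x / (1 - x)))) /
          ∏ j ∈ range i, (1 + q ^ j * (x / (1 - x))))) / (1 - q ^ n) ^ p := by
  have hnode : ∀ k, (qInt q k / qInt q n) ^ p =
      (∑ i ∈ range (p + 1), (-1) ^ i * p.choose i * (q ^ i) ^ k) / (1 - q ^ n) ^ p := fun k => by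
    rw [qInt_eq_div hq1.ne, qInt_eq_div hq1.ne, div_div_div_cancel_right₀ (by linarith), div_pow,
      one_sub_pow_eq_sum]
    simp only [← pow_mul, mul_comm k]
  simp_rw [← sum_pow_mul_lupasB hq0 hx0 hx1, lupasR, hnode, div_mul_eq_mul_div, ← sum_div,
    mul_sum, sum_mul, mul_assoc]
  rw [sum_comm]

lemma lupasRInf_pow (hq0 : 0 < q) (hq1 : q < 1) (hx0 : 0 ≤ x) (hx1 : x < 1) (p : ℕ) :
    lupasRInf q (· ^ p) x =
      ∑ i ∈ range (p + 1), (-1) ^ i * p.choose i *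
        (1 / ∏ j ∈ range i, (1 + q ^ j * (x / (1 - x)))) := by
  rw [lupasRInf, if_neg hq1.not_gt, lupasRInfLow, if_neg hx1.ne]
  refine HasSum.tsum_eq ?_
  have h := hasSum_sum fun i (_ : i ∈ range (p + 1)) =>
    (hasSum_pow_mul_lupasBInf hq0 hq1 hx0 hx1 i).mul_left ((-1 : ℝ) ^ i * p.choose i)
  refine h.congr_fun fun k => ?_
  simp_rw [← mul_assoc, ← sum_mul, ← pow_mul, mul_comm _ k, pow_mul, ← one_sub_pow_eq_sum]

lemma lupasR_apply_one (hq : 0 < q) {n : ℕ} (hn : n ≠ 0) (f : ℝ → ℝ) : lupasR q n f 1 = f 1 := by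
  obtain ⟨m, rfl⟩ := Nat.exists_eq_succ_of_ne_zero hn
  have hlow : ∀ k ∈ range (m + 1), f (qInt q k / qInt q (m + 1)) * lupasB q (m + 1) k 1 = 0 :=
    fun k hk => by
      have : m + 1 - k ≠ 0 := by have := mem_range.mp hk; omega
      simp [lupasB, this]
  have hI := (qInt_pos hq m.succ_ne_zero).ne'
  rw [lupasR, sum_range_succ, sum_eq_zero hlow, lupasB, qBinom_self hq]
  simp [hI, prod_range_pow_succ, (pow_pos hq _).ne']

lemma lupasRInf_apply_one (hq : q ≤ 1) (f : ℝ → ℝ) : lupasRInf q f 1 = f 1 := by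
  rw [lupasRInf, if_neg hq.not_gt, lupasRInfLow, if_pos rfl]

end Lupas

theorem lupasL_third_moment (q : ℝ) (hq0 : 0 < q) (hq1 : q < 1) (n : ℕ) (hn : 2 ≤ n)
    (x : ℝ) (hx : x ∈ Set.Icc (0:ℝ) 1) :
    lupasL q n (fun t => t ^ 3) x =
      q ^ n / (qInt q n) ^ 2 * (x * (1 - vq q x)) *
        (2 - q ^ n + qInt q (n - 1) * (1 + q) * vq (q ^ 2) x +
          qInt q n * q * vq (q ^ 2) x) := by
  obtain ⟨hx0, hx1⟩ := hx
  obtain rfl | hx1 := hx1.eq_or_lt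
  · rw [lupasL, lupasR_apply_one hq0 (by omega), lupasRInf_apply_one hq1.le, vq]
    simp [hq0.ne']
  obtain ⟨m, rfl⟩ : ∃ m, n = m + 1 := ⟨n - 1, by omega⟩
  have hQ : 1 - q ^ (m + 1) ≠ 0 := (sub_pos.mpr (pow_lt_one₀ hq0.le hq1 m.succ_ne_zero)).ne'
  have h1q : 1 - q ≠ 0 := by linarith
  have hv1 : 1 - x + q * x ≠ 0 := (add_pos_of_pos_of_nonneg (by linarith) (by positivity)).ne'
  have hv2 : 1 - x + q ^ 2 * x ≠ 0 := (add_pos_of_pos_of_nonneg (by linarith) (by positivity)).ne'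
  rw [lupasL, lupasR_pow hq0 hq1 hx0 hx1, lupasRInf_pow hq0 hq1 hx0 hx1, vq, vq,
    qInt_eq_div hq1.ne, qInt_eq_div hq1.ne, Nat.add_sub_cancel]
  norm_num [sum_range_succ, prod_range_succ]
  field_simp
  ring
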